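/- Let (Λ,d) be a k-graph satisfying the standing assumption (★). The map ((x,y),n) ↦ (x, n, σ^n y) is a bijection from G_s × ℤ^k, where G_s = {(x,y) ∈ Λ^Δ × Λ^Δ : x ~_s y}, onto the set {(x,n,z) ∈ Λ^Δ × ℤ^k × Λ^Δ : there exist ℓ,m ∈ ℕ^k with σ^ℓ(π x) = σ^m(π z) and n = ℓ − m}. In particular, for x,z ∈ Λ^Δ and n ∈ ℤ^k, there exist ℓ,m ∈ ℕ^k with σ^ℓ(π x) = σ^m(π z) and n = ℓ − m if and only if x ~_s σ^{−n} z. -/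

import Mathlib

open scoped Classical
open TopologicalSpace MeasureTheory

/-- A `k`-graph: a countable small category with a degree functor to `ℕ^k`
satisfying the unique factorisation property.  Objects are identified with
the degree-zero morphisms. -/
structure KGraph (k : ℕ) where
  Mor : Type
  countable : Countable Mor
  src : Mor → Mor
  rng : Mor → Mor
  deg : Mor → Fin k → ℕ
  comp : (lam mu : Mor) → src lam = rng mu → Mor
  deg_src : ∀ lam, deg (src lam) = 0
  deg_rng : ∀ lam, deg (rng lam) = 0
  src_obj : ∀ v, deg v = 0 → src v = v
  rng_obj : ∀ v, deg v = 0 → rng v = v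
  src_comp : ∀ lam mu h, src (comp lam mu h) = src mu
  rng_comp : ∀ lam mu h, rng (comp lam mu h) = rng lam
  deg_comp : ∀ lam mu h, deg (comp lam mu h) = deg lam + deg mu
  id_comp : ∀ lam (h : src (rng lam) = rng lam), comp (rng lam) lam h = lam
  comp_id : ∀ lam (h : src lam = rng (src lam)), comp lam (src lam) h = lam
  assoc : ∀ l m n (h1 : src l = rng m) (h2 : src m = rng n)
      (h3 : src (comp l m h1) = rng n) (h4 : src l = rng (comp m n h2)),
      comp (comp l m h1) n h3 = comp l (comp m n h2) h4
  factor : ∀ lam (n1 n2 : Fin k → ℕ), deg lam = n1 + n2 →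
      ∃! p : Mor × Mor, deg p.1 = n1 ∧ deg p.2 = n2 ∧
        ∃ h : src p.1 = rng p.2, comp p.1 p.2 h = lam

namespace KGraph

variable {k : ℕ}

/-- The vertices (objects) of a `k`-graph are the degree-zero morphisms. -/
def IsVertex (Λ : KGraph k) (v : Λ.Mor) : Prop := Λ.deg v = 0

/-- Standing assumption (★): for each `p ∈ ℕ^k` the restrictions of `r` and `s`
to `Λ^p` are surjective (onto the vertices) and finite-to-one. -/
def Star (Λ : KGraph k) : Prop :=
  ∀ p : Fin k → ℕ,
    (∀ v, Λ.IsVertex v →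
      (∃ lam, Λ.deg lam = p ∧ Λ.rng lam = v) ∧
      (∃ lam, Λ.deg lam = p ∧ Λ.src lam = v)) ∧
    (∀ v, Λ.IsVertex v →
      {lam | Λ.deg lam = p ∧ Λ.rng lam = v}.Finite ∧
      {lam | Λ.deg lam = p ∧ Λ.src lam = v}.Finite)

/-- Irreducibility (strong connectedness) of a `k`-graph. -/
def Irreducible (Λ : KGraph k) : Prop :=
  ∀ u v, Λ.IsVertex u → Λ.IsVertex v →
    ∃ lam, Λ.deg lam ≠ 0 ∧ Λ.rng lam = u ∧ Λ.src lam = v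

/-- Primitivity of a `k`-graph. -/
def Primitive (Λ : KGraph k) : Prop :=
  ∃ p : Fin k → ℕ, p ≠ 0 ∧ ∀ u v, Λ.IsVertex u → Λ.IsVertex v →
    ∃ lam, Λ.deg lam = p ∧ Λ.rng lam = u ∧ Λ.src lam = v

/-- The degree of a morphism, viewed in `ℤ^k`. -/
def degZ (Λ : KGraph k) (lam : Λ.Mor) : Fin k → ℤ := fun i => (Λ.deg lam i : ℤ)

/-- The number of morphisms of degree `p` with range `u` and source `v`. -/
noncomputable def count (Λ : KGraph k) (p : Fin k → ℕ) (u v : Λ.Mor) : ℕ :=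
  Nat.card {lam : Λ.Mor // Λ.deg lam = p ∧ Λ.rng lam = u ∧ Λ.src lam = v}

end KGraph

/-- A two-sided infinite path in a `k`-graph: a degree-preserving functor from
the `k`-graph `Δ = {(m,n) ∈ ℤ^k × ℤ^k : m ≤ n}` to `Λ`. -/
structure TwoSidedPath {k : ℕ} (Λ : KGraph k) where
  toFun : ∀ m n : Fin k → ℤ, m ≤ n → Λ.Mor
  deg_eq : ∀ m n (h : m ≤ n) (i : Fin k), (Λ.deg (toFun m n h) i : ℤ) = n i - m i
  src_eq : ∀ m n (h : m ≤ n), Λ.src (toFun m n h) = toFun n n le_rfl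
  rng_eq : ∀ m n (h : m ≤ n), Λ.rng (toFun m n h) = toFun m m le_rfl
  comp_eq : ∀ l m n (h1 : l ≤ m) (h2 : m ≤ n),
      Λ.comp (toFun l m h1) (toFun m n h2)
        ((src_eq l m h1).trans (rng_eq m n h2).symm) = toFun l n (h1.trans h2)

/-- A one-sided infinite path in a `k`-graph: a degree-preserving functor from
the `k`-graph `Ω = {(m,n) ∈ ℕ^k × ℕ^k : m ≤ n}` to `Λ`. -/
structure OneSidedPath {k : ℕ} (Λ : KGraph k) where
  toFun : ∀ m n : Fin k → ℕ, m ≤ n → Λ.Mor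
  deg_eq : ∀ m n (h : m ≤ n) (i : Fin k), Λ.deg (toFun m n h) i = n i - m i
  src_eq : ∀ m n (h : m ≤ n), Λ.src (toFun m n h) = toFun n n le_rfl
  rng_eq : ∀ m n (h : m ≤ n), Λ.rng (toFun m n h) = toFun m m le_rfl
  comp_eq : ∀ l m n (h1 : l ≤ m) (h2 : m ≤ n),
      Λ.comp (toFun l m h1) (toFun m n h2)
        ((src_eq l m h1).trans (rng_eq m n h2).symm) = toFun l n (h1.trans h2)

namespace TwoSidedPath

variable {k : ℕ} {Λ : KGraph k}

theorem toFun_congr (x : TwoSidedPath Λ) {m n m' n' : Fin k → ℤ}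
    (hm : m = m') (hn : n = n') (h : m ≤ n) (h' : m' ≤ n') :
    x.toFun m n h = x.toFun m' n' h' := by subst hm; subst hn; rfl

/-- The vertex `x(0)` of a two-sided path. -/
def obj0 (x : TwoSidedPath Λ) : Λ.Mor := x.toFun 0 0 le_rfl

end TwoSidedPath

theorem le_add_degZ {k : ℕ} (Λ : KGraph k) (n : Fin k → ℤ) (lam : Λ.Mor) :
    n ≤ n + Λ.degZ lam :=
  Pi.le_def.mpr fun i => by
    show n i ≤ n i + (Λ.deg lam i : ℤ); omega

/-- The cylinder set `Z(λ, n) = {x ∈ Λ^Δ : x(n, n + d(λ)) = λ}`. -/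
def ZCyl {k : ℕ} (Λ : KGraph k) (lam : Λ.Mor) (n : Fin k → ℤ) :
    Set (TwoSidedPath Λ) :=
  {x | x.toFun n (n + Λ.degZ lam) (le_add_degZ Λ n lam) = lam}

/-- The topology on `Λ^Δ` generated by the cylinder sets. -/
instance {k : ℕ} (Λ : KGraph k) : TopologicalSpace (TwoSidedPath Λ) :=
  TopologicalSpace.generateFrom {S | ∃ lam n, S = ZCyl Λ lam n}

noncomputable instance {k : ℕ} (Λ : KGraph k) : MeasurableSpace (TwoSidedPath Λ) :=
  borel _

/-- The one-sided cylinder set `Z(λ) = {x ∈ Λ^Ω : x(0, d(λ)) = λ}`. -/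
def OCyl {k : ℕ} (Λ : KGraph k) (lam : Λ.Mor) : Set (OneSidedPath Λ) :=
  {x | x.toFun 0 (Λ.deg lam) (Pi.le_def.mpr fun _ => Nat.zero_le _) = lam}

/-- The topology on `Λ^Ω` generated by the cylinder sets. -/
instance {k : ℕ} (Λ : KGraph k) : TopologicalSpace (OneSidedPath Λ) :=
  TopologicalSpace.generateFrom {S | ∃ lam, S = OCyl Λ lam}

/-- The shift `σ^n` on the two-sided path space, for `n ∈ ℤ^k`. -/
def TwoSidedPath.shift {k : ℕ} {Λ : KGraph k} (n : Fin k → ℤ)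
    (x : TwoSidedPath Λ) : TwoSidedPath Λ where
  toFun l m h := x.toFun (l + n) (m + n) (add_le_add_left h n)
  deg_eq l m h i := by
    show (Λ.deg (x.toFun (l + n) (m + n) (add_le_add_left h n)) i : ℤ) = m i - l i
    have h' := x.deg_eq (l + n) (m + n) (add_le_add_left h n) i
    simp only [Pi.add_apply] at h'
    omega
  src_eq l m h := x.src_eq (l + n) (m + n) (add_le_add_left h n)
  rng_eq l m h := x.rng_eq (l + n) (m + n) (add_le_add_left h n)
  comp_eq l m m' h1 h2 :=
    x.comp_eq (l + n) (m + n) (m' + n) (add_le_add_left h1 n) (add_le_add_left h2 n)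

/-- The shift `σ^p` on the one-sided path space, for `p ∈ ℕ^k`. -/
def OneSidedPath.shift {k : ℕ} {Λ : KGraph k} (p : Fin k → ℕ)
    (x : OneSidedPath Λ) : OneSidedPath Λ where
  toFun l m h := x.toFun (l + p) (m + p) (add_le_add_left h p)
  deg_eq l m h i := by
    show Λ.deg (x.toFun (l + p) (m + p) (add_le_add_left h p)) i = m i - l i
    have h' := x.deg_eq (l + p) (m + p) (add_le_add_left h p) i
    simp only [Pi.add_apply] at h'
    omega
  src_eq l m h := x.src_eq (l + p) (m + p) (add_le_add_left h p)
  rng_eq l m h := x.rng_eq (l + p) (m + p) (add_le_add_left h p)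
  comp_eq l m m' h1 h2 :=
    x.comp_eq (l + p) (m + p) (m' + p) (add_le_add_left h1 p) (add_le_add_left h2 p)

/-- The vector `(j, …, j) ∈ ℤ^k`, i.e. `j·e` where `e = (1,…,1)`. -/
def jvecZ (k : ℕ) (j : ℕ) : Fin k → ℤ := fun _ => (j : ℤ)

theorem neg_jvecZ_le (k j : ℕ) : -(jvecZ k j) ≤ jvecZ k j :=
  Pi.le_def.mpr fun _ => by show -((j : ℤ)) ≤ (j : ℤ); omega

/-- Coercion `ℕ^k → ℤ^k`. -/
def coeZ {k : ℕ} (p : Fin k → ℕ) : Fin k → ℤ := fun i => (p i : ℤ)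

theorem coeZ_le_coeZ {k : ℕ} {m n : Fin k → ℕ} (h : m ≤ n) : coeZ m ≤ coeZ n :=
  Pi.le_def.mpr fun i => by
    show ((m i : ℤ)) ≤ (n i : ℤ)
    exact_mod_cast Pi.le_def.mp h i

theorem neg_coeZ_le {k : ℕ} (m : Fin k → ℕ) : -(coeZ m) ≤ coeZ m :=
  Pi.le_def.mpr fun i => by show -((m i : ℤ)) ≤ (m i : ℤ); omega

/-- The quantity `h(x,y) ∈ ℕ∞`:  `0` if `x(0) ≠ y(0)`, and otherwise
`1 + sup { j : x(-je, je) = y(-je, je) }`. -/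
noncomputable def hdist {k : ℕ} {Λ : KGraph k} (x y : TwoSidedPath Λ) : ℕ∞ :=
  if x.obj0 = y.obj0 then
    1 + sSup {c : ℕ∞ | ∃ j : ℕ, c = (j : ℕ∞) ∧
        x.toFun (-(jvecZ k j)) (jvecZ k j) (neg_jvecZ_le k j) =
        y.toFun (-(jvecZ k j)) (jvecZ k j) (neg_jvecZ_le k j)}
  else 0

/-- The metric `ρ(x,y) = r^{h(x,y)}`, with `r^∞ = 0`. -/
noncomputable def rho {k : ℕ} {Λ : KGraph k} (r : ℝ) (x y : TwoSidedPath Λ) : ℝ :=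
  if hdist x y = ⊤ then 0 else r ^ (hdist x y).toNat

/-- The local contracting set `E_x`. -/
def Ex {k : ℕ} {Λ : KGraph k} (x : TwoSidedPath Λ) : Set (TwoSidedPath Λ) :=
  {y | ∀ m n (h : m ≤ n), 0 ≤ m → y.toFun m n h = x.toFun m n h}

/-- The local expanding set `F_x`. -/
def Fx {k : ℕ} {Λ : KGraph k} (x : TwoSidedPath Λ) : Set (TwoSidedPath Λ) :=
  {y | ∀ m n (h : m ≤ n), n ≤ 0 → y.toFun m n h = x.toFun m n h}

/-- The restriction map `π : Λ^Δ → Λ^Ω`. -/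
def TwoSidedPath.restrict {k : ℕ} {Λ : KGraph k} (x : TwoSidedPath Λ) :
    OneSidedPath Λ where
  toFun m n h := x.toFun (coeZ m) (coeZ n) (coeZ_le_coeZ h)
  deg_eq m n h i := by
    show Λ.deg (x.toFun (coeZ m) (coeZ n) (coeZ_le_coeZ h)) i = n i - m i
    have h' := x.deg_eq (coeZ m) (coeZ n) (coeZ_le_coeZ h) i
    simp only [coeZ] at h'
    omega
  src_eq m n h := x.src_eq (coeZ m) (coeZ n) (coeZ_le_coeZ h)
  rng_eq m n h := x.rng_eq (coeZ m) (coeZ n) (coeZ_le_coeZ h)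
  comp_eq l m n h1 h2 :=
    x.comp_eq (coeZ l) (coeZ m) (coeZ n) (coeZ_le_coeZ h1) (coeZ_le_coeZ h2)

/-- Stable equivalence: `x ∼ₛ y` iff the two paths eventually agree to the right. -/
def SRel {k : ℕ} {Λ : KGraph k} (x y : TwoSidedPath Λ) : Prop :=
  ∃ m : Fin k → ℤ, ∀ n (h : m ≤ n), x.toFun m n h = y.toFun m n h

/-- Unstable equivalence: `x ∼ᵤ y` iff the two paths eventually agree to the left. -/
def URel {k : ℕ} {Λ : KGraph k} (x y : TwoSidedPath Λ) : Prop :=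
  ∃ n : Fin k → ℤ, ∀ m (h : m ≤ n), x.toFun m n h = y.toFun m n h

/-- Asymptotic equivalence: `x ∼ₐ y` iff `x ∼ₛ y` and `x ∼ᵤ y`. -/
def ARel {k : ℕ} {Λ : KGraph k} (x y : TwoSidedPath Λ) : Prop :=
  ∃ m : Fin k → ℕ, ∀ n : Fin k → ℤ, coeZ m ≤ n →
    (∀ h : coeZ m ≤ n, x.toFun (coeZ m) n h = y.toFun (coeZ m) n h) ∧
    (∀ h' : -n ≤ -(coeZ m), x.toFun (-n) (-(coeZ m)) h' = y.toFun (-n) (-(coeZ m)) h')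

/-- The groupoid `G_{s,m}` of pairs agreeing from `m ∈ ℤ^k` onwards. -/
def Gsm {k : ℕ} (Λ : KGraph k) (m : Fin k → ℤ) :
    Set (TwoSidedPath Λ × TwoSidedPath Λ) :=
  {p | ∀ n (h : m ≤ n), p.1.toFun m n h = p.2.toFun m n h}

theorem TwoSidedPath.self_mem_cyl {k : ℕ} {Λ : KGraph k} (x : TwoSidedPath Λ)
    (m n : Fin k → ℤ) (h : m ≤ n) : x ∈ ZCyl Λ (x.toFun m n h) m := by
  show x.toFun m (m + Λ.degZ (x.toFun m n h)) _ = x.toFun m n h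
  apply x.toFun_congr rfl
  funext i
  show m i + (Λ.deg (x.toFun m n h) i : ℤ) = n i
  have h' := x.deg_eq m n h i
  omega

theorem degZ_obj0 {k : ℕ} {Λ : KGraph k} (x : TwoSidedPath Λ) :
    Λ.degZ x.obj0 = 0 := by
  funext i
  show (Λ.deg (x.toFun 0 0 le_rfl) i : ℤ) = 0
  have h' := x.deg_eq 0 0 le_rfl i
  simp only [Pi.zero_apply] at h'
  omega

theorem mem_vertex_cyl {k : ℕ} {Λ : KGraph k} {x z : TwoSidedPath Λ}
    (hz : z ∈ ZCyl Λ x.obj0 0) : z.obj0 = x.obj0 := by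
  have h0 : (0 : Fin k → ℤ) = 0 + Λ.degZ x.obj0 := by rw [degZ_obj0]; simp
  calc z.obj0 = z.toFun 0 (0 + Λ.degZ x.obj0) (le_add_degZ Λ 0 x.obj0) :=
        z.toFun_congr rfl h0 le_rfl (le_add_degZ Λ 0 x.obj0)
    _ = x.obj0 := hz

/-!
Unique factorisation forces two paths that agree on every segment starting at `m₀` to agree on
every segment inside `[m₀, ∞)`. Hence `σ^ℓ(π x) = σ^m(π z)` says exactly that `x` and `σ^{m-ℓ} z`
agree from `ℓ` onwards, i.e. `x ∼ₛ σ^{-n} z` for `n = ℓ - m`; conversely, if `x ∼ₛ σ^{-n} z` one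
takes `ℓ` large enough and `m = ℓ - n`. The bijection is then inverted by
`(x,n,z) ↦ ((x, σ^{-n} z), n)`.
-/

theorem KGraph.eq_of_comp_eq_comp {k : ℕ} (Λ : KGraph k) {μ₁ ν₁ μ₂ ν₂ : Λ.Mor}
    {h₁ : Λ.src μ₁ = Λ.rng ν₁} {h₂ : Λ.src μ₂ = Λ.rng ν₂}
    (hμ : Λ.deg μ₁ = Λ.deg μ₂) (hν : Λ.deg ν₁ = Λ.deg ν₂)
    (h : Λ.comp μ₁ ν₁ h₁ = Λ.comp μ₂ ν₂ h₂) : μ₁ = μ₂ ∧ ν₁ = ν₂ := by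
  obtain ⟨p, -, hp⟩ := Λ.factor (Λ.comp μ₁ ν₁ h₁) (Λ.deg μ₁) (Λ.deg ν₁) (Λ.deg_comp _ _ _)
  have e₁ := hp (μ₁, ν₁) ⟨rfl, rfl, h₁, rfl⟩
  have e₂ := hp (μ₂, ν₂) ⟨hμ.symm, hν.symm, h₂, h.symm⟩
  exact Prod.ext_iff.mp (e₁.trans e₂.symm)

theorem coeZ_add {k : ℕ} (p q : Fin k → ℕ) : coeZ (p + q) = coeZ p + coeZ q := by
  funext i
  simp [coeZ]

theorem OneSidedPath.ext {k : ℕ} {Λ : KGraph k} {x y : OneSidedPath Λ}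
    (h : ∀ m n (hmn : m ≤ n), x.toFun m n hmn = y.toFun m n hmn) : x = y := by
  cases x; cases y
  congr
  funext m n hmn
  exact h m n hmn

namespace TwoSidedPath

variable {k : ℕ} {Λ : KGraph k}

theorem ext {x y : TwoSidedPath Λ}
    (h : ∀ m n (hmn : m ≤ n), x.toFun m n hmn = y.toFun m n hmn) : x = y := by
  cases x; cases y
  congr
  funext m n hmn
  exact h m n hmn

theorem deg_toFun_eq (x y : TwoSidedPath Λ) {m n : Fin k → ℤ} (h : m ≤ n) :
    Λ.deg (x.toFun m n h) = Λ.deg (y.toFun m n h) := by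
  funext i
  have hx := x.deg_eq m n h i
  have hy := y.deg_eq m n h i
  omega

theorem toFun_eq_of_agree_from {x y : TwoSidedPath Λ} {m₀ : Fin k → ℤ}
    (h : ∀ n (hn : m₀ ≤ n), x.toFun m₀ n hn = y.toFun m₀ n hn)
    {a b : Fin k → ℤ} (ha : m₀ ≤ a) (hab : a ≤ b) : x.toFun a b hab = y.toFun a b hab := by
  have hx := x.comp_eq m₀ a b ha hab
  have hy := y.comp_eq m₀ a b ha hab
  exact (Λ.eq_of_comp_eq_comp (deg_toFun_eq x y ha) (deg_toFun_eq x y hab)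
    (hx.trans ((h b _).trans hy.symm))).2

theorem shift_shift (a b : Fin k → ℤ) (x : TwoSidedPath Λ) :
    (x.shift b).shift a = x.shift (a + b) :=
  ext fun _ _ _ => x.toFun_congr (add_assoc _ _ _) (add_assoc _ _ _) _ _

theorem shift_zero (x : TwoSidedPath Λ) : x.shift 0 = x :=
  ext fun _ _ _ => x.toFun_congr (add_zero _) (add_zero _) _ _

theorem shift_neg_shift (n : Fin k → ℤ) (x : TwoSidedPath Λ) : (x.shift n).shift (-n) = x := by
  rw [shift_shift, neg_add_cancel, shift_zero]

theorem shift_shift_neg (n : Fin k → ℤ) (x : TwoSidedPath Λ) : (x.shift (-n)).shift n = x := by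
  rw [shift_shift, add_neg_cancel, shift_zero]

theorem _root_.OneSidedPath.shift_restrict (l : Fin k → ℕ) (x : TwoSidedPath Λ) :
    x.restrict.shift l = (x.shift (coeZ l)).restrict :=
  OneSidedPath.ext fun a b _ => x.toFun_congr (coeZ_add a l) (coeZ_add b l) _ _

theorem restrict_shift_eq_of_agree_from {x y : TwoSidedPath Λ} {m₀ p : Fin k → ℤ}
    (h : ∀ n (hn : m₀ ≤ n), x.toFun m₀ n hn = y.toFun m₀ n hn) (hp : m₀ ≤ p) :
    (x.shift p).restrict = (y.shift p).restrict :=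
  OneSidedPath.ext fun a b _ =>
    toFun_eq_of_agree_from h (fun i => by
      show m₀ i ≤ (a i : ℤ) + p i
      have : m₀ i ≤ p i := hp i
      omega) _

theorem sRel_of_restrict_shift_eq {x y : TwoSidedPath Λ} {p : Fin k → ℤ}
    (h : (x.shift p).restrict = (y.shift p).restrict) : SRel x y := by
  refine ⟨p, fun n hn => ?_⟩
  let q : Fin k → ℕ := fun i => (n i - p i).toNat
  have h0 : coeZ 0 + p = p := by
    funext i
    simp [coeZ]
  have hq : coeZ q + p = n := by
    funext i
    have : p i ≤ n i := hn i
    simp only [coeZ, q, Pi.add_apply]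
    omega
  have hxy := congrArg (fun w : OneSidedPath Λ => w.toFun 0 q (fun _ => Nat.zero_le _)) h
  calc x.toFun p n hn = x.toFun (coeZ 0 + p) (coeZ q + p) _ := x.toFun_congr h0.symm hq.symm _ _
    _ = y.toFun (coeZ 0 + p) (coeZ q + p) _ := hxy
    _ = y.toFun p n hn := y.toFun_congr h0 hq _ _

end TwoSidedPath

open TwoSidedPath in
theorem exists_shift_restrict_eq_iff_sRel {k : ℕ} {Λ : KGraph k} (x z : TwoSidedPath Λ)
    (n : Fin k → ℤ) :
    (∃ l m : Fin k → ℕ,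
        OneSidedPath.shift l x.restrict = OneSidedPath.shift m z.restrict ∧
        n = coeZ l - coeZ m) ↔
      SRel x (z.shift (-n)) := by
  simp only [OneSidedPath.shift_restrict]
  constructor
  · rintro ⟨l, m, h, rfl⟩
    refine sRel_of_restrict_shift_eq (p := coeZ l) ?_
    rwa [shift_shift, neg_sub, add_sub_cancel]
  · rintro ⟨m₀, h⟩
    let l : Fin k → ℕ := fun i => (max (m₀ i) (n i)).toNat
    let m : Fin k → ℕ := fun i => ((l i : ℤ) - n i).toNat
    have hm₀ : m₀ ≤ coeZ l := fun i => by simp only [coeZ, l]; omega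
    have hm : coeZ m = coeZ l - n := by
      funext i
      simp only [coeZ, m, l, Pi.sub_apply]
      omega
    refine ⟨l, m, ?_, by rw [hm, sub_sub_cancel]⟩
    rw [restrict_shift_eq_of_agree_from h hm₀, shift_shift, hm, sub_eq_add_neg]

def semidirectProductEquiv {k : ℕ} (Λ : KGraph k) :
    (TwoSidedPath Λ × TwoSidedPath Λ) × (Fin k → ℤ) ≃
      TwoSidedPath Λ × (Fin k → ℤ) × TwoSidedPath Λ where
  toFun q := (q.1.1, q.2, q.1.2.shift q.2)
  invFun w := ((w.1, w.2.2.shift (-w.2.1)), w.2.1)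
  left_inv q := by simp [TwoSidedPath.shift_neg_shift]
  right_inv w := by simp [TwoSidedPath.shift_shift_neg]

theorem semidirect_product_bijection_general {k : ℕ} (Λ : KGraph k) :
    Set.BijOn
      (fun q : (TwoSidedPath Λ × TwoSidedPath Λ) × (Fin k → ℤ) =>
        (q.1.1, q.2, TwoSidedPath.shift q.2 q.1.2))
      {q : (TwoSidedPath Λ × TwoSidedPath Λ) × (Fin k → ℤ) | SRel q.1.1 q.1.2}
      {w : TwoSidedPath Λ × (Fin k → ℤ) × TwoSidedPath Λ |
        ∃ l m : Fin k → ℕ,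
          OneSidedPath.shift l w.1.restrict = OneSidedPath.shift m w.2.2.restrict ∧
          w.2.1 = coeZ l - coeZ m} ∧
    ∀ (x z : TwoSidedPath Λ) (n : Fin k → ℤ),
      (∃ l m : Fin k → ℕ,
        OneSidedPath.shift l x.restrict = OneSidedPath.shift m z.restrict ∧
        n = coeZ l - coeZ m) ↔
      SRel x (TwoSidedPath.shift (-n) z) := by
  refine ⟨(semidirectProductEquiv Λ).bijOn fun q => ?_, exists_shift_restrict_eq_iff_sRel⟩
  exact (exists_shift_restrict_eq_iff_sRel q.1.1 (q.1.2.shift q.2) q.2).trans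
    (by rw [TwoSidedPath.shift_neg_shift]; rfl)

/-- The map `((x,y), n) ↦ (x, n, σ^n y)` is a bijection from
`G_s × ℤ^k` onto `{(x, n, z) : σ^ℓ(π x) = σ^m(π z), n = ℓ - m}`; in
particular `(x, n, z)` lies in the latter set iff `x ∼ₛ σ^{-n} z`. -/
theorem semidirect_product_bijection {k : ℕ} (hk : 0 < k) (Λ : KGraph k)
    (hstar : Λ.Star) :
    Set.BijOn
      (fun q : (TwoSidedPath Λ × TwoSidedPath Λ) × (Fin k → ℤ) =>
        (q.1.1, q.2, TwoSidedPath.shift q.2 q.1.2))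
      {q : (TwoSidedPath Λ × TwoSidedPath Λ) × (Fin k → ℤ) | SRel q.1.1 q.1.2}
      {w : TwoSidedPath Λ × (Fin k → ℤ) × TwoSidedPath Λ |
        ∃ l m : Fin k → ℕ,
          OneSidedPath.shift l w.1.restrict = OneSidedPath.shift m w.2.2.restrict ∧
          w.2.1 = coeZ l - coeZ m} ∧
    ∀ (x z : TwoSidedPath Λ) (n : Fin k → ℤ),
      (∃ l m : Fin k → ℕ,
        OneSidedPath.shift l x.restrict = OneSidedPath.shift m z.restrict ∧
        n = coeZ l - coeZ m) ↔
      SRel x (TwoSidedPath.shift (-n) z) :=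
  semidirect_product_bijection_general Λ
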